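/- In Max-Welter, a position A = (a_1, ..., a_k) with k ≥ 2 has Sprague-Grundy value 1 if and only if either (a) A = (0, 1, ..., l, l+2, l+3, ..., k) for some l ≤ k-2 (i.e., the coins occupy all of 0..k except one square l+1 with l+1 ≤ k-1), or (b) a_k = a_{k-1} + 1 and a_{k-1} + k is odd. -/
import Mathlib


/-- A move in Max-Welter: the coin on the largest occupied square moves to an
empty square strictly to its left. -/
def MWMove (s t : Finset ℕ) : Prop :=
  ∃ (hs : s.Nonempty) (j : ℕ), j < s.max' hs ∧ j ∉ s ∧
    t = insert j (s.erase (s.max' hs))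

theorem MWMove.sum_lt {s t : Finset ℕ} (h : MWMove s t) :
    t.sum id < s.sum id := by
  obtain ⟨hs, j, hj, hjs, rfl⟩ := h
  have hm : s.max' hs ∈ s := s.max'_mem hs
  have hje : j ∉ s.erase (s.max' hs) := fun hc => hjs (Finset.mem_of_mem_erase hc)
  have h2 : (s.erase (s.max' hs)).sum id + s.max' hs = s.sum id :=
    Finset.sum_erase_add s id hm
  rw [Finset.sum_insert hje]
  simp only [id] at *
  omega

/-- Normal-play Sprague-Grundy value of a Max-Welter position. -/
noncomputable def grundy (s : Finset ℕ) : ℕ :=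
  sInf {n : ℕ | ∀ t, ∀ _h : MWMove s t, grundy t ≠ n}
termination_by s.sum id
decreasing_by exact _h.sum_lt

open Classical in
/-- Misère Sprague-Grundy value: terminal positions get value 1. -/
noncomputable def mgrundy (s : Finset ℕ) : ℕ :=
  if ∀ t, ¬ MWMove s t then 1
  else sInf {n : ℕ | ∀ t, ∀ _h : MWMove s t, mgrundy t ≠ n}
termination_by s.sum id
decreasing_by exact _h.sum_lt

/-- Normal play: `s` is a P-position iff every move leads to a non-P-position. -/
def MWPPos (s : Finset ℕ) : Prop :=
  ∀ t, ∀ _h : MWMove s t, ¬ MWPPos t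
termination_by s.sum id
decreasing_by exact _h.sum_lt

/-- Misère play: the player to move wins iff there is no move (the opponent made
the last move and loses), or some move leads to a position losing for the opponent. -/
def MWMisereWin (s : Finset ℕ) : Prop :=
  (∀ t, ¬ MWMove s t) ∨ ∃ t, ∃ _h : MWMove s t, ¬ MWMisereWin t
termination_by s.sum id
decreasing_by exact _h.sum_lt

open Finset in
theorem grundy_def (s : Finset ℕ) :
    grundy s = sInf {n : ℕ | ∀ t, MWMove s t → grundy t ≠ n} := by
  rw [grundy]

/-- max of a finset of naturals (0 if empty) -/
def mx (s : Finset ℕ) : ℕ := s.sup id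
/-- second max -/
def sx (s : Finset ℕ) : ℕ := (s.erase (mx s)).sup id

theorem mx_eq_max' {s : Finset ℕ} (hs : s.Nonempty) : mx s = s.max' hs := by
  rw [Finset.max'_eq_sup', Finset.sup'_eq_sup]; rfl

theorem mem_mx {s : Finset ℕ} (hs : s.Nonempty) : mx s ∈ s := by
  rw [mx_eq_max' hs]; exact s.max'_mem hs

theorem le_mx {s : Finset ℕ} {x : ℕ} (hx : x ∈ s) : x ≤ mx s := Finset.le_sup (f := id) hx

theorem erase_mx_nonempty {s : Finset ℕ} (h2 : 2 ≤ s.card) : (s.erase (mx s)).Nonempty := by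
  rw [← Finset.card_pos, Finset.card_erase_of_mem (mem_mx (Finset.card_pos.mp (by omega)))]
  omega

theorem mem_sx' {s : Finset ℕ} (h2 : 2 ≤ s.card) : sx s ∈ s.erase (mx s) := by
  rw [sx, ← Finset.sup'_eq_sup (erase_mx_nonempty h2), ← Finset.max'_eq_sup']
  exact Finset.max'_mem _ _

theorem mem_sx {s : Finset ℕ} (h2 : 2 ≤ s.card) : sx s ∈ s :=
  Finset.mem_of_mem_erase (mem_sx' h2)

theorem sx_lt_mx {s : Finset ℕ} (h2 : 2 ≤ s.card) : sx s < mx s :=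
  lt_of_le_of_ne (le_mx (mem_sx h2)) (Finset.ne_of_mem_erase (mem_sx' h2))

theorem le_sx {s : Finset ℕ} {x : ℕ} (hx : x ∈ s) (hne : x ≠ mx s) : x ≤ sx s :=
  Finset.le_sup (f := id) (Finset.mem_erase.mpr ⟨hne, hx⟩)

theorem mwmove_iff {s t : Finset ℕ} (hs : s.Nonempty) :
    MWMove s t ↔ ∃ j, j < mx s ∧ j ∉ s ∧ t = insert j (s.erase (mx s)) := by
  constructor
  · rintro ⟨hs', j, h1, h2, h3⟩
    exact ⟨j, by rwa [mx_eq_max' hs], h2, by rwa [mx_eq_max' hs]⟩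
  · rintro ⟨j, h1, h2, h3⟩
    exact ⟨hs, j, by rwa [mx_eq_max' hs] at h1, h2, by rwa [mx_eq_max' hs] at h3⟩

theorem grundy_le_sum (s : Finset ℕ) : grundy s ≤ s.sum id := by
  rw [grundy_def]
  refine Nat.sInf_le ?_
  intro t ht h
  have h1 : grundy t ≤ t.sum id := grundy_le_sum t
  have h2 := ht.sum_lt
  omega
termination_by s.sum id
decreasing_by exact ht.sum_lt

theorem succ_sum_mem (s : Finset ℕ) :
    s.sum id + 1 ∈ {n : ℕ | ∀ t, MWMove s t → grundy t ≠ n} := by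
  intro t ht h
  have h1 := grundy_le_sum t
  have h2 := ht.sum_lt
  omega

theorem grundy_eq_zero_of {s : Finset ℕ} (h : ∀ t, MWMove s t → grundy t ≠ 0) :
    grundy s = 0 := by
  rw [grundy_def]
  exact Nat.sInf_eq_zero.mpr (Or.inl h)

theorem grundy_ne_zero_of {s t : Finset ℕ} (ht : MWMove s t) (hg : grundy t = 0) :
    grundy s ≠ 0 := by
  intro h0
  rw [grundy_def] at h0
  rcases Nat.sInf_eq_zero.mp h0 with h | h
  · exact h t ht hg
  · exact absurd (h ▸ succ_sum_mem s) (Set.notMem_empty _)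

theorem grundy_ne_one_of {s t : Finset ℕ} (ht : MWMove s t) (hg : grundy t = 1) :
    grundy s ≠ 1 := by
  intro h1
  rw [grundy_def] at h1
  have hmem : sInf {n : ℕ | ∀ t, MWMove s t → grundy t ≠ n}
      ∈ {n : ℕ | ∀ t, MWMove s t → grundy t ≠ n} :=
    Nat.sInf_mem ⟨_, succ_sum_mem s⟩
  rw [h1] at hmem
  exact hmem t ht hg

theorem grundy_eq_one_of {s t0 : Finset ℕ} (ht0 : MWMove s t0) (hg0 : grundy t0 = 0)
    (h1 : ∀ t, MWMove s t → grundy t ≠ 1) : grundy s = 1 := by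
  have hne := grundy_ne_zero_of ht0 hg0
  rw [grundy_def] at hne ⊢
  have hle : sInf {n : ℕ | ∀ t, MWMove s t → grundy t ≠ n} ≤ 1 := Nat.sInf_le h1
  omega

section MoveFacts
variable {s : Finset ℕ} {j : ℕ}

theorem move_card (h2 : 2 ≤ s.card) (hjs : j ∉ s) :
    (insert j (s.erase (mx s))).card = s.card := by
  have hs : s.Nonempty := Finset.card_pos.mp (by omega)
  rw [Finset.card_insert_of_notMem (fun hc => hjs (Finset.mem_of_mem_erase hc)),
    Finset.card_erase_of_mem (mem_mx hs)]
  omega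

theorem mx_move_hi (h2 : 2 ≤ s.card) (hjs : j ∉ s) (hjB : sx s < j) :
    mx (insert j (s.erase (mx s))) = j := by
  apply le_antisymm
  · apply Finset.sup_le
    intro x hx
    rcases Finset.mem_insert.mp hx with rfl | hx
    · exact le_rfl
    · exact le_trans (le_sx (Finset.mem_of_mem_erase hx) (Finset.ne_of_mem_erase hx)) hjB.le
  · exact Finset.le_sup (f := id) (Finset.mem_insert_self _ _)

theorem sx_move_hi (h2 : 2 ≤ s.card) (hjs : j ∉ s) (hjB : sx s < j) :
    sx (insert j (s.erase (mx s))) = sx s := by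
  rw [sx, mx_move_hi h2 hjs hjB,
    Finset.erase_insert (fun hc => hjs (Finset.mem_of_mem_erase hc))]
  rfl

theorem mx_move_lo (h2 : 2 ≤ s.card) (hjB : j < sx s) :
    mx (insert j (s.erase (mx s))) = sx s := by
  apply le_antisymm
  · apply Finset.sup_le
    intro x hx
    rcases Finset.mem_insert.mp hx with rfl | hx
    · exact hjB.le
    · exact le_sx (Finset.mem_of_mem_erase hx) (Finset.ne_of_mem_erase hx)
  · exact Finset.le_sup (f := id) (Finset.mem_insert_of_mem (mem_sx' h2))

theorem sx_move_lo (h2 : 2 ≤ s.card) (hjB : j < sx s)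
    (hmem : sx s - 1 ∈ insert j (s.erase (mx s))) (hB1 : 1 ≤ sx s) :
    sx (insert j (s.erase (mx s))) = sx s - 1 := by
  rw [sx, mx_move_lo h2 hjB]
  apply le_antisymm
  · apply Finset.sup_le
    intro x hx
    obtain ⟨hne, hx⟩ := Finset.mem_erase.mp hx
    simp only [id_eq]
    rcases Finset.mem_insert.mp hx with rfl | hx
    · omega
    · have := le_sx (Finset.mem_of_mem_erase hx) (Finset.ne_of_mem_erase hx)
      omega
  · exact Finset.le_sup (f := id) (Finset.mem_erase.mpr ⟨by omega, hmem⟩)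

end MoveFacts

section Special
variable {k : ℕ}

theorem k_notMem_range : k ∉ Finset.range (k - 1) := by
  simp only [Finset.mem_range]; omega

theorem spc_card (hk : 2 ≤ k) : (insert k (Finset.range (k - 1))).card = k := by
  rw [Finset.card_insert_of_notMem k_notMem_range, Finset.card_range]; omega

theorem spc_mx (hk : 2 ≤ k) : mx (insert k (Finset.range (k - 1))) = k := by
  apply le_antisymm
  · apply Finset.sup_le
    intro x hx
    rcases Finset.mem_insert.mp hx with rfl | hx
    · exact le_rfl
    · have := Finset.mem_range.mp hx; simp only [id_eq]; omega
  · exact Finset.le_sup (f := id) (Finset.mem_insert_self _ _)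

theorem spc_sx (hk : 2 ≤ k) : sx (insert k (Finset.range (k - 1))) = k - 2 := by
  rw [sx, spc_mx hk, Finset.erase_insert k_notMem_range]
  apply le_antisymm
  · apply Finset.sup_le
    intro x hx
    have := Finset.mem_range.mp hx; simp only [id_eq]; omega
  · exact Finset.le_sup (f := id) (Finset.mem_range.mpr (by omega))

theorem range_mx (hk : 2 ≤ k) : mx (Finset.range k) = k - 1 := by
  apply le_antisymm
  · exact Finset.sup_le fun x hx => by have := Finset.mem_range.mp hx; simp only [id_eq]; omega
  · exact Finset.le_sup (f := id) (Finset.mem_range.mpr (by omega))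

theorem range_sx (hk : 2 ≤ k) : sx (Finset.range k) = k - 2 := by
  have h1 : Finset.range k = insert (k - 1) (Finset.range (k - 1)) := by
    rw [← Finset.range_add_one]; congr 1; omega
  rw [sx, range_mx hk, h1, Finset.erase_insert (by simp only [Finset.mem_range]; omega)]
  apply le_antisymm
  · exact Finset.sup_le fun x hx => by have := Finset.mem_range.mp hx; simp only [id_eq]; omega
  · exact Finset.le_sup (f := id) (Finset.mem_range.mpr (by omega))

theorem range_card : (Finset.range k).card = k := Finset.card_range k

end Special

/-- The inductive characterization of grundy values 0 and 1. -/
def MWChar (s : Finset ℕ) : Prop :=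
  (grundy s = 0 ↔ (mx s = sx s + 1 ∧ Even (sx s + s.card))) ∧
  (grundy s = 1 ↔ ((mx s = sx s + 1 ∧ Odd (sx s + s.card)) ∨
    s = insert s.card (Finset.range (s.card - 1))))

section Cases
variable {s : Finset ℕ}

theorem sx_card (h2 : 2 ≤ s.card) : s.card ≤ sx s + 2 := by
  have hs : s.Nonempty := Finset.card_pos.mp (by omega)
  have hsub : s.erase (mx s) ⊆ Finset.range (sx s + 1) := fun x hx =>
    Finset.mem_range.mpr (by
      have := le_sx (Finset.mem_of_mem_erase hx) (Finset.ne_of_mem_erase hx); omega)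
  have h := Finset.card_le_card hsub
  rw [Finset.card_range, Finset.card_erase_of_mem (mem_mx hs)] at h
  omega

theorem exists_move_pair (h2 : 2 ≤ s.card) (hBk : s.card ≤ sx s + 1) :
    ∃ t, MWMove s t ∧ t.card = s.card ∧ mx t = sx s ∧ sx t = sx s - 1 := by
  have hs : s.Nonempty := Finset.card_pos.mp (by omega)
  have hB1 : 1 ≤ sx s := by omega
  have hlt := sx_lt_mx h2
  by_cases hmem : sx s - 1 ∈ s
  · have hex : ∃ j, j < sx s ∧ j ∉ s := by
      by_contra hc
      push_neg at hc
      have hsub : insert (mx s) (insert (sx s) (Finset.range (sx s))) ⊆ s := by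
        intro x hx
        rcases Finset.mem_insert.mp hx with rfl | hx
        · exact mem_mx hs
        rcases Finset.mem_insert.mp hx with rfl | hx
        · exact mem_sx h2
        · exact hc x (Finset.mem_range.mp hx)
      have hcard : (insert (mx s) (insert (sx s) (Finset.range (sx s)))).card = sx s + 2 := by
        rw [Finset.card_insert_of_notMem, Finset.card_insert_of_notMem, Finset.card_range]
        · simp only [Finset.mem_range]; omega
        · simp only [Finset.mem_insert, Finset.mem_range]; push_neg; exact ⟨by omega, by omega⟩
      have := Finset.card_le_card hsub
      omega
    obtain ⟨j, hj, hjs⟩ := hex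
    refine ⟨_, (mwmove_iff hs).mpr ⟨j, lt_trans hj hlt, hjs, rfl⟩, move_card h2 hjs,
      mx_move_lo h2 hj, sx_move_lo h2 hj ?_ hB1⟩
    exact Finset.mem_insert_of_mem (Finset.mem_erase.mpr ⟨by omega, hmem⟩)
  · have hj : sx s - 1 < sx s := by omega
    refine ⟨_, (mwmove_iff hs).mpr ⟨sx s - 1, lt_trans hj hlt, hmem, rfl⟩, move_card h2 hmem,
      mx_move_lo h2 hj, sx_move_lo h2 hj (Finset.mem_insert_self _ _) hB1⟩

theorem caseA (h2 : 2 ≤ s.card) (ih : ∀ t, MWMove s t → MWChar t)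
    (hadj : mx s = sx s + 1) (hev : Even (sx s + s.card)) : grundy s = 0 := by
  have hs : s.Nonempty := Finset.card_pos.mp (by omega)
  apply grundy_eq_zero_of
  intro t ht hg
  obtain ⟨j, hj, hjs, rfl⟩ := (mwmove_iff hs).mp ht
  have hjne : j ≠ sx s := fun h => hjs (h ▸ mem_sx h2)
  have hjB : j < sx s := by omega
  have hmxt := mx_move_lo h2 hjB
  have hct := move_card (j := j) h2 hjs
  obtain ⟨ha', hev'⟩ := ((ih _ ht).1.mp hg)
  rw [Nat.even_iff] at hev hev'
  omega

theorem caseB (h2 : 2 ≤ s.card) (ih : ∀ t, MWMove s t → MWChar t)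
    (hadj : mx s = sx s + 1) (hodd : Odd (sx s + s.card)) : grundy s = 1 := by
  have hs : s.Nonempty := Finset.card_pos.mp (by omega)
  have hsc := sx_card h2
  have hBk : s.card ≤ sx s + 1 := by
    by_contra hc
    have h : s.card = sx s + 2 := by omega
    rw [Nat.odd_iff] at hodd
    omega
  obtain ⟨t0, ht0, hc0, hm0, hs0⟩ := exists_move_pair h2 hBk
  have hg0 : grundy t0 = 0 := by
    apply ((ih t0 ht0).1).mpr
    refine ⟨by rw [hm0, hs0]; omega, ?_⟩
    rw [hs0, hc0, Nat.even_iff]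
    rw [Nat.odd_iff] at hodd
    omega
  apply grundy_eq_one_of ht0 hg0
  intro t ht hg1
  obtain ⟨j, hj, hjs, rfl⟩ := (mwmove_iff hs).mp ht
  have hjne : j ≠ sx s := fun h => hjs (h ▸ mem_sx h2)
  have hjB : j < sx s := by omega
  have hmxt := mx_move_lo h2 hjB
  have hct := move_card (j := j) h2 hjs
  rcases ((ih _ ht).2).mp hg1 with ⟨ha', ho'⟩ | hsp
  · rw [Nat.odd_iff] at hodd ho'
    omega
  · have hmm : mx (insert j (s.erase (mx s))) = (insert j (s.erase (mx s))).card := by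
      conv_lhs => rw [hsp]
      exact spc_mx (by rw [hct]; exact h2)
    rw [Nat.odd_iff] at hodd
    omega

theorem caseC (h2 : 2 ≤ s.card) (ih : ∀ t, MWMove s t → MWChar t)
    (hsp : s = insert s.card (Finset.range (s.card - 1))) : grundy s = 1 := by
  obtain ⟨k, hk⟩ : ∃ k, s.card = k := ⟨_, rfl⟩
  rw [hk] at hsp h2
  have hs : s.Nonempty := Finset.card_pos.mp (by omega)
  have hmx : mx s = k := by rw [hsp]; exact spc_mx h2
  have herase : s.erase (mx s) = Finset.range (k - 1) := by
    rw [hmx, hsp]; exact Finset.erase_insert k_notMem_range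
  have hjs : k - 1 ∉ s := by
    rw [hsp]; simp only [Finset.mem_insert, Finset.mem_range]; omega
  have hmove : MWMove s (insert (k - 1) (s.erase (mx s))) :=
    (mwmove_iff hs).mpr ⟨k - 1, by omega, hjs, rfl⟩
  have htr : insert (k - 1) (s.erase (mx s)) = Finset.range k := by
    rw [herase]
    have hkk : k = (k - 1) + 1 := by omega
    conv_rhs => rw [hkk, Finset.range_add_one]
  have hg0 : grundy (insert (k - 1) (s.erase (mx s))) = 0 := by
    apply ((ih _ hmove).1).mpr
    rw [htr, range_mx h2, range_sx h2, range_card]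
    exact ⟨by omega, by rw [Nat.even_iff]; omega⟩
  apply grundy_eq_one_of hmove hg0
  intro t ht hg1
  obtain ⟨j, hj, hjs', rfl⟩ := (mwmove_iff hs).mp ht
  have hjr : j ∉ Finset.range (k - 1) := fun hc =>
    hjs' (by rw [hsp]; exact Finset.mem_insert_of_mem hc)
  rw [Finset.mem_range] at hjr
  rw [hmx] at hj
  have hje : j = k - 1 := by omega
  subst hje
  omega

theorem caseD (h2 : 2 ≤ s.card) (ih : ∀ t, MWMove s t → MWChar t)
    (hnadj : mx s ≠ sx s + 1) (hsp : s ≠ insert s.card (Finset.range (s.card - 1))) :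
    grundy s ≠ 0 ∧ grundy s ≠ 1 := by
  have hs : s.Nonempty := Finset.card_pos.mp (by omega)
  have hlt := sx_lt_mx h2
  have hM2 : sx s + 2 ≤ mx s := by omega
  have hB1s : sx s + 1 ∉ s := by
    intro hc
    rcases eq_or_ne (sx s + 1) (mx s) with h | h
    · omega
    · have := le_sx hc h; omega
  have hmv1 : MWMove s (insert (sx s + 1) (s.erase (mx s))) :=
    (mwmove_iff hs).mpr ⟨sx s + 1, by omega, hB1s, rfl⟩
  have hm1 : mx (insert (sx s + 1) (s.erase (mx s))) = sx s + 1 :=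
    mx_move_hi h2 hB1s (lt_add_one _)
  have hs1 : sx (insert (sx s + 1) (s.erase (mx s))) = sx s :=
    sx_move_hi h2 hB1s (lt_add_one _)
  have hc1 := move_card (j := sx s + 1) h2 hB1s
  constructor
  · rcases Nat.even_or_odd (sx s + s.card) with hev | hodd
    · refine grundy_ne_zero_of hmv1 ((ih _ hmv1).1.mpr ⟨by rw [hm1, hs1], ?_⟩)
      rw [hs1, hc1]; exact hev
    · have hBk : s.card ≤ sx s + 1 := by
        have := sx_card h2
        rw [Nat.odd_iff] at hodd
        omega
      obtain ⟨t0, ht0, hc0, hm0, hs0⟩ := exists_move_pair h2 hBk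
      refine grundy_ne_zero_of ht0 ((ih _ ht0).1.mpr ⟨by rw [hm0, hs0]; omega, ?_⟩)
      rw [hs0, hc0, Nat.even_iff]
      rw [Nat.odd_iff] at hodd
      omega
  · rcases Nat.even_or_odd (sx s + s.card) with hev | hodd
    · by_cases hB : s.card ≤ sx s + 1
      · obtain ⟨t0, ht0, hc0, hm0, hs0⟩ := exists_move_pair h2 hB
        refine grundy_ne_one_of ht0 ((ih _ ht0).2.mpr (Or.inl ⟨by rw [hm0, hs0]; omega, ?_⟩))
        rw [hs0, hc0, Nat.odd_iff]
        rw [Nat.even_iff] at hev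
        omega
      · have hBe : sx s = s.card - 2 := by have := sx_card h2; omega
        have her : s.erase (mx s) = Finset.range (s.card - 1) := by
          apply Finset.eq_of_subset_of_card_le
          · intro x hx
            have := le_sx (Finset.mem_of_mem_erase hx) (Finset.ne_of_mem_erase hx)
            exact Finset.mem_range.mpr (by omega)
          · rw [Finset.card_range, Finset.card_erase_of_mem (mem_mx hs)]
        have hMk : s.card < mx s := by
          have hins : s = insert (mx s) (Finset.range (s.card - 1)) := by
            rw [← her, Finset.insert_erase (mem_mx hs)]
          by_contra hcon
          push_neg at hcon
          have hEq : mx s = s.card := by omega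
          rw [hEq] at hins
          exact hsp hins
        have hks : s.card ∉ s := by
          intro hc
          rcases eq_or_ne s.card (mx s) with h | h
          · omega
          · have := le_sx hc h; omega
        have hmv2 : MWMove s (insert s.card (s.erase (mx s))) :=
          (mwmove_iff hs).mpr ⟨s.card, hMk, hks, rfl⟩
        refine grundy_ne_one_of hmv2 ((ih _ hmv2).2.mpr (Or.inr ?_))
        rw [move_card h2 hks, her]
    · refine grundy_ne_one_of hmv1 ((ih _ hmv1).2.mpr (Or.inl ⟨by rw [hm1, hs1], ?_⟩))
      rw [hs1, hc1]; exact hodd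

end Cases

theorem mainChar : ∀ n (s : Finset ℕ), s.sum id ≤ n → 2 ≤ s.card → MWChar s := by
  intro n
  induction n with
  | zero =>
    intro s hsum h2
    exfalso
    have hs : s.Nonempty := Finset.card_pos.mp (by omega)
    have hlt := sx_lt_mx h2
    have h1 : id (mx s) ≤ s.sum id :=
      Finset.single_le_sum (f := id) (fun i _ => Nat.zero_le _) (mem_mx hs)
    rw [id_eq] at h1
    omega
  | succ n IHn =>
    intro s hsum h2
    have hs : s.Nonempty := Finset.card_pos.mp (by omega)
    have ih : ∀ t, MWMove s t → MWChar t := by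
      intro t ht
      have hsum' : t.sum id ≤ n := by have := ht.sum_lt; omega
      have hc : t.card = s.card := by
        obtain ⟨j, hj, hjs, rfl⟩ := (mwmove_iff hs).mp ht
        exact move_card h2 hjs
      exact IHn t hsum' (by omega)
    by_cases hadj : mx s = sx s + 1
    · rcases Nat.even_or_odd (sx s + s.card) with hev | hodd
      · have h0 := caseA h2 ih hadj hev
        constructor
        · exact ⟨fun _ => ⟨hadj, hev⟩, fun _ => h0⟩
        · constructor
          · intro h1; omega
          · rintro (⟨_, ho⟩ | hsp)
            · rw [Nat.even_iff] at hev; rw [Nat.odd_iff] at ho; omega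
            · have hx : mx s = s.card := by conv_lhs => rw [hsp]; exact spc_mx h2
              have hy : sx s = s.card - 2 := by conv_lhs => rw [hsp]; exact spc_sx h2
              omega
      · have h1 := caseB h2 ih hadj hodd
        refine ⟨⟨fun h => by omega, fun ⟨_, he⟩ => ?_⟩, ⟨fun _ => Or.inl ⟨hadj, hodd⟩, fun _ => h1⟩⟩
        rw [Nat.even_iff] at he; rw [Nat.odd_iff] at hodd; omega
    · by_cases hsp : s = insert s.card (Finset.range (s.card - 1))
      · have h1 := caseC h2 ih hsp
        refine ⟨⟨fun h => by omega, fun ⟨ha, _⟩ => absurd ha hadj⟩,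
          ⟨fun _ => Or.inr hsp, fun _ => h1⟩⟩
      · obtain ⟨hne0, hne1⟩ := caseD h2 ih hadj hsp
        refine ⟨⟨fun h => absurd h hne0, fun ⟨ha, _⟩ => absurd ha hadj⟩,
          ⟨fun h => absurd h hne1, ?_⟩⟩
        rintro (⟨ha, _⟩ | h)
        · exact absurd ha hadj
        · exact absurd h hsp

/-- positions of Sprague-Grundy value 1. -/
theorem maxWelter_grundy_eq_one_iff (k : ℕ) (hk : 2 ≤ k) (a : Fin k → ℕ)
    (ha : StrictMono a) :
    grundy (Finset.image a Finset.univ) = 1 ↔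
      (∃ l, l ≤ k - 2 ∧
        Finset.image a Finset.univ = (Finset.range (k + 1)).erase (l + 1)) ∨
      (a ⟨k - 1, by omega⟩ = a ⟨k - 2, by omega⟩ + 1 ∧
        Odd (a ⟨k - 2, by omega⟩ + k)) := by
  set s := Finset.image a Finset.univ with hsdef
  have hinj := ha.injective
  have hcard : s.card = k := by
    rw [hsdef, Finset.card_image_of_injective _ hinj, Finset.card_univ, Fintype.card_fin]
  have h2 : 2 ≤ s.card := by omega
  have hs : s.Nonempty := Finset.card_pos.mp (by omega)
  have hmem : ∀ i : Fin k, a i ∈ s := fun i => Finset.mem_image_of_mem a (Finset.mem_univ i)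
  have hmx : mx s = a ⟨k - 1, by omega⟩ := by
    apply le_antisymm
    · apply Finset.sup_le
      intro x hx
      obtain ⟨i, -, rfl⟩ := Finset.mem_image.mp hx
      simp only [id_eq]
      exact ha.monotone (by rw [Fin.le_def]; have := i.isLt; simp; omega)
    · exact le_mx (hmem _)
  have hsx : sx s = a ⟨k - 2, by omega⟩ := by
    apply le_antisymm
    · apply Finset.sup_le
      intro x hx
      obtain ⟨hne, hx⟩ := Finset.mem_erase.mp hx
      obtain ⟨i, -, rfl⟩ := Finset.mem_image.mp hx
      simp only [id_eq]
      rw [hmx] at hne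
      have hine : i ≠ ⟨k - 1, by omega⟩ := fun h => hne (by rw [h])
      have hival : i.val ≠ k - 1 := fun h => hine (Fin.ext h)
      exact ha.monotone (by rw [Fin.le_def]; have := i.isLt; simp; omega)
    · refine le_sx (hmem _) ?_
      rw [hmx]
      intro h
      have := hinj h
      have : k - 2 = k - 1 := congrArg Fin.val this
      omega
  have hchar := (mainChar (s.sum id) s le_rfl h2).2
  rw [hchar, hmx, hsx]
  simp only [hcard]
  constructor
  · rintro (h | h)
    · exact Or.inr h
    · refine Or.inl ⟨k - 2, le_rfl, ?_⟩
      rw [h]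
      ext x
      simp only [Finset.mem_insert, Finset.mem_range, Finset.mem_erase]
      omega
  · rintro (⟨l, hl, hmeq⟩ | h)
    · by_cases hlk : l = k - 2
      · refine Or.inr ?_
        subst hlk
        rw [hmeq]
        ext x
        simp only [Finset.mem_insert, Finset.mem_range, Finset.mem_erase]
        omega
      · have hl2 : l + 1 ≤ k - 2 := by omega
        refine Or.inl ?_
        have hmxE : mx s = k := by
          rw [hmeq]
          apply le_antisymm
          · refine Finset.sup_le fun x hx => ?_
            have := Finset.mem_range.mp (Finset.mem_of_mem_erase hx)
            simp only [id_eq]; omega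
          · exact le_mx (Finset.mem_erase.mpr ⟨by omega, Finset.mem_range.mpr (by omega)⟩)
        have hsxE : sx s = k - 1 := by
          rw [sx, hmxE, hmeq]
          apply le_antisymm
          · refine Finset.sup_le fun x hx => ?_
            simp only [Finset.mem_erase, Finset.mem_range] at hx
            simp only [id_eq]; omega
          · exact Finset.le_sup (f := id)
              (by simp only [Finset.mem_erase, Finset.mem_range]; omega)
        rw [← hmx, ← hsx, hmxE, hsxE]
        exact ⟨by omega, by rw [Nat.odd_iff]; omega⟩
    · exact Or.inl h
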